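/- arXiv:2507.21515 — 2 statements merged into one kernel-verified Lean document; each statement's English description precedes it below -/
import Mathlib

section
/- Let e | q^r−1 with rad(e) = k·p_1···p_s where p_1,…,p_s are distinct primes not dividing k. Then N(e,A) ≥ (1−s)·N(k,A) + Σ_{i=1}^{s} N(k·p_i, A) for any A ⊆ F_{q^r}^*. -/
/-- γ is `e`-free: γ = β^d with d ∣ e implies d = 1. -/
def IsFreeElt {F : Type*} [Field F] (e : ℕ) (γ : Fˣ) : Prop :=
  ∀ (β : Fˣ) (d : ℕ), d ∣ e → γ = β ^ d → d = 1

/-- The number of `e`-free elements of `A`. -/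
noncomputable def nFree {F : Type*} [Field F] (e : ℕ) (A : Set Fˣ) : ℕ :=
  {γ ∈ A | IsFreeElt e γ}.ncard

/-- The radical (largest squarefree divisor) of `n`. -/
def radical (n : ℕ) : ℕ := n.primeFactors.prod id

/-!
Being `m`-free only depends on the primes dividing `m`, and `mn`-free means `m`-free and
`n`-free. So if `S` is the set of `k`-free elements of `A` and `Tᵢ ⊆ S` its `pᵢ`-free
elements, the `e`-free elements of `A` form `⋂ Tᵢ`, the `k pᵢ`-free ones form `Tᵢ`, and the
inequality is the union bound `|S \ ⋂ Tᵢ| ≤ ∑ |S \ Tᵢ|`.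
-/

section IsFreeElt

variable {F : Type*} [Field F] {γ : Fˣ}

theorem isFreeElt_iff_forall_prime {m : ℕ} :
    IsFreeElt m γ ↔ ∀ ℓ, ℓ.Prime → ℓ ∣ m → ∀ β : Fˣ, γ ≠ β ^ ℓ := by
  refine ⟨fun h ℓ hℓ hℓm β hβ ↦ hℓ.ne_one (h β ℓ hℓm hβ), fun h β d hdm hβ ↦ ?_⟩
  by_contra hd
  obtain ⟨ℓ, hℓ, c, rfl⟩ := Nat.exists_prime_and_dvd hd
  exact h ℓ hℓ (dvd_of_mul_right_dvd hdm) (β ^ c) (by rw [hβ, ← pow_mul, mul_comm])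

theorem isFreeElt_one : IsFreeElt 1 γ :=
  fun _ _ hd _ ↦ Nat.dvd_one.mp hd

theorem isFreeElt_mul_iff {m n : ℕ} :
    IsFreeElt (m * n) γ ↔ IsFreeElt m γ ∧ IsFreeElt n γ := by
  simp only [isFreeElt_iff_forall_prime]
  refine ⟨fun h ↦ ⟨fun ℓ hℓ hℓm ↦ h ℓ hℓ (hℓm.mul_right n),
    fun ℓ hℓ hℓn ↦ h ℓ hℓ (hℓn.mul_left m)⟩, fun ⟨hm, hn⟩ ℓ hℓ hℓmn ↦ ?_⟩
  rcases hℓ.prime.dvd_mul.mp hℓmn with hℓm | hℓn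
  exacts [hm ℓ hℓ hℓm, hn ℓ hℓ hℓn]

theorem isFreeElt_prod_iff {ι : Type*} (t : Finset ι) (f : ι → ℕ) :
    IsFreeElt (∏ i ∈ t, f i) γ ↔ ∀ i ∈ t, IsFreeElt (f i) γ := by
  classical
  induction t using Finset.induction_on with
  | empty => simpa using isFreeElt_one
  | insert j t hj ih => simp [Finset.prod_insert hj, isFreeElt_mul_iff, ih]

theorem isFreeElt_radical_iff {n : ℕ} (hn : n ≠ 0) :
    IsFreeElt (radical n) γ ↔ IsFreeElt n γ := by
  have hdvd : ∀ ℓ, ℓ.Prime → (ℓ ∣ radical n ↔ ℓ ∣ n) := fun ℓ hℓ ↦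
    ⟨fun h ↦ h.trans (Nat.prod_primeFactors_dvd n),
      fun h ↦ Finset.dvd_prod_of_mem id (Nat.mem_primeFactors.mpr ⟨hℓ, h, hn⟩)⟩
  simp only [isFreeElt_iff_forall_prime]
  exact forall₂_congr fun ℓ hℓ ↦ by rw [hdvd ℓ hℓ]

end IsFreeElt

theorem Set.ncard_add_sum_ncard_sep_le {α ι : Type*} [Finite α] (S : Set α)
    (P : ι → α → Prop) (t : Finset ι) :
    S.ncard + ∑ i ∈ t, {x ∈ S | P i x}.ncard ≤
      {x ∈ S | ∀ i ∈ t, P i x}.ncard + t.card * S.ncard := by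
  classical
  induction t using Finset.induction_on with
  | empty => simp
  | insert j t hj ih =>
    set X := {x ∈ S | P j x}
    set Y := {x ∈ S | ∀ i ∈ t, P i x}
    have hXY : X ∩ Y = {x ∈ S | ∀ i ∈ insert j t, P i x} := by
      ext x
      simp only [X, Y, Set.mem_inter_iff, Set.mem_ofPred_eq, Finset.forall_mem_insert]
      tauto
    have hunion : (X ∪ Y).ncard ≤ S.ncard :=
      Set.ncard_le_ncard (Set.union_subset (Set.sep_subset _ _) (Set.sep_subset _ _))
    have := Set.ncard_union_add_ncard_inter X Y
    rw [Finset.sum_insert hj, Finset.card_insert_of_notMem hj, ← hXY]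
    nlinarith

theorem stmt_7_general (q r : ℕ)
    (F : Type*) [Field F] [Fintype F] (hF : Fintype.card F = q ^ r)
    (e : ℕ) (he : e ∣ q ^ r - 1) (s k : ℕ) (p : Fin s → ℕ)
    (hrad : radical e = k * ∏ i, p i) (A : Set Fˣ) :
    (nFree e A : ℝ) ≥ (1 - (s : ℝ)) * (nFree k A : ℝ) + ∑ i, (nFree (k * p i) A : ℝ) := by
  have he0 : e ≠ 0 := by
    refine ne_zero_of_dvd_ne_zero ?_ he
    have : 1 < q ^ r := hF ▸ Fintype.one_lt_card
    omega
  have hfree_e : ∀ γ : Fˣ,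
      IsFreeElt e γ ↔ IsFreeElt k γ ∧ ∀ i ∈ Finset.univ, IsFreeElt (p i) γ := fun γ ↦ by
    rw [← isFreeElt_radical_iff he0, hrad, isFreeElt_mul_iff, isFreeElt_prod_iff]
  have hbound := Set.ncard_add_sum_ncard_sep_le {γ ∈ A | IsFreeElt k γ}
    (fun i γ ↦ IsFreeElt (p i) γ) Finset.univ
  simp only [Set.sep_ofPred, and_assoc, ← hfree_e, ← isFreeElt_mul_iff, Finset.card_univ,
    Fintype.card_fin] at hbound
  change nFree k A + ∑ i, nFree (k * p i) A ≤ nFree e A + s * nFree k A at hbound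
  have := (Nat.cast_le (α := ℝ)).mpr hbound
  push_cast at this
  linarith

theorem stmt_7 (q r : ℕ) (hq : IsPrimePow q) (hr : 1 ≤ r)
    (F : Type*) [Field F] [Fintype F] (hF : Fintype.card F = q ^ r)
    (e : ℕ) (he : e ∣ q ^ r - 1) (s k : ℕ) (p : Fin s → ℕ)
    (hp : ∀ i, (p i).Prime) (hinj : Function.Injective p)
    (hpk : ∀ i, ¬ p i ∣ k) (hrad : radical e = k * ∏ i, p i) (A : Set Fˣ) :
    (nFree e A : ℝ) ≥ (1 - (s : ℝ)) * (nFree k A : ℝ) + ∑ i, (nFree (k * p i) A : ℝ) :=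
  stmt_7_general q r F hF e he s k p hrad A
end

section
/- Let e | q^r−1 with rad(e) = k·p_1···p_{s1}·l_1···l_{s2}, all primes distinct and coprime to k. With ε = Σ_{j=1}^{s2} 1/l_j, for any A ⊆ F_{q^r}^*: N(e,A) ≥ N(k p_1···p_{s1}, A) − ε·|A| + Σ_{j=1}^{s2} ( N(l_j,A) − (1 − 1/l_j)·|A| ). -/
/-!
An element that is not `e`-free is an `ℓ`-th power for some prime `ℓ ∣ e`, and every such `ℓ`
divides either `k p₁ ⋯ p_{s₁}` or one of the `l_j`. Hence a `k p₁ ⋯ p_{s₁}`-free element of `A`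
that is not `e`-free fails to be `l_j`-free for some `j`, and the union bound gives
`N(e, A) ≥ N(k p₁ ⋯ p_{s₁}, A) - ∑ⱼ (|A| - N(l_j, A))`. The right-hand side of the theorem is
this bound rewritten, since `ε |A| + ∑ⱼ (1 - 1/l_j) |A| = s₂ |A|`.
-/

theorem Nat.Prime.dvd_radical {ℓ n : ℕ} (hℓ : ℓ.Prime) (h : ℓ ∣ n) (hn : n ≠ 0) :
    ℓ ∣ radical n :=
  Finset.dvd_prod_of_mem id (Nat.mem_primeFactors.mpr ⟨hℓ, h, hn⟩)

namespace IsFreeElt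

variable {F : Type*} [Field F] {e : ℕ} {γ : Fˣ}

theorem exists_prime_of_not (h : ¬ IsFreeElt e γ) :
    ∃ ℓ, ℓ.Prime ∧ ℓ ∣ e ∧ ∃ β : Fˣ, γ = β ^ ℓ := by
  simp only [IsFreeElt, not_forall] at h
  obtain ⟨β, d, hde, rfl, hd1⟩ := h
  obtain ⟨ℓ, hℓ, hℓd⟩ := Nat.exists_prime_and_dvd hd1
  exact ⟨ℓ, hℓ, hℓd.trans hde, β ^ (d / ℓ), by rw [← pow_mul, Nat.div_mul_cancel hℓd]⟩

theorem of_forall_prime_dvd (h : ∀ ℓ, ℓ.Prime → ℓ ∣ e → ∃ m, ℓ ∣ m ∧ IsFreeElt m γ) :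
    IsFreeElt e γ := by
  by_contra hγ
  obtain ⟨ℓ, hℓ, hℓe, β, rfl⟩ := exists_prime_of_not hγ
  obtain ⟨m, hℓm, hm⟩ := h ℓ hℓ hℓe
  exact hℓ.ne_one (hm β ℓ hℓm rfl)

end IsFreeElt

theorem ncard_sep_le_add_sum_ncard_sep_not {α ι : Type*} [Fintype ι] {A : Set α}
    (hA : A.Finite) {P Q : α → Prop} {R : ι → α → Prop}
    (h : ∀ x ∈ A, Q x → (∀ i, R i x) → P x) :
    {x ∈ A | Q x}.ncard ≤ {x ∈ A | P x}.ncard + ∑ i, {x ∈ A | ¬ R i x}.ncard := by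
  have hsub : {x ∈ A | Q x} ⊆ {x ∈ A | P x} ∪ ⋃ i, {x ∈ A | ¬ R i x} := by
    rintro x ⟨hxA, hxQ⟩
    by_cases hR : ∀ i, R i x
    · exact Or.inl ⟨hxA, h x hxA hxQ hR⟩
    · obtain ⟨i, hi⟩ := not_forall.mp hR
      exact Or.inr (Set.mem_iUnion.mpr ⟨i, hxA, hi⟩)
  calc {x ∈ A | Q x}.ncard
      ≤ ({x ∈ A | P x} ∪ ⋃ i, {x ∈ A | ¬ R i x}).ncard :=
        Set.ncard_le_ncard hsub ((hA.sep _).union (Set.finite_iUnion fun i => hA.sep _))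
    _ ≤ {x ∈ A | P x}.ncard + (⋃ i, {x ∈ A | ¬ R i x}).ncard := Set.ncard_union_le _ _
    _ ≤ _ := Nat.add_le_add_left (Set.ncard_iUnion_le_of_fintype _) _

theorem ncard_sep_add_sum_sub_le_ncard_sep {α ι : Type*} [Fintype ι] {A : Set α}
    (hA : A.Finite) {P Q : α → Prop} {R : ι → α → Prop}
    (h : ∀ x ∈ A, Q x → (∀ i, R i x) → P x) :
    ({x ∈ A | Q x}.ncard : ℝ) + ∑ i, (({x ∈ A | R i x}.ncard : ℝ) - A.ncard) ≤
      {x ∈ A | P x}.ncard := by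
  have hnot : ∀ i, ({x ∈ A | ¬ R i x}.ncard : ℝ) = A.ncard - {x ∈ A | R i x}.ncard := by
    intro i
    have : {x ∈ A | ¬ R i x} = A \ {x ∈ A | R i x} := by ext; simp
    rw [this, Set.cast_ncard_sdiff (Set.sep_subset _ _) hA]
  have hle : ({x ∈ A | Q x}.ncard : ℝ) ≤
      {x ∈ A | P x}.ncard + ∑ i, ({x ∈ A | ¬ R i x}.ncard : ℝ) := by
    exact_mod_cast ncard_sep_le_add_sum_ncard_sep_not hA h
  simp only [hnot, Finset.sum_sub_distrib] at hle ⊢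
  linarith

theorem stmt_8_general (q r : ℕ) (hq : IsPrimePow q) (hr : 1 ≤ r)
    (F : Type*) [Field F] [Fintype F]
    (e : ℕ) (he : e ∣ q ^ r - 1) (s₁ s₂ k : ℕ)
    (p : Fin s₁ → ℕ) (l : Fin s₂ → ℕ)
    (hrad : radical e = k * (∏ i, p i) * ∏ j, l j) (A : Set Fˣ) :
    (nFree e A : ℝ) ≥
      (nFree (k * ∏ i, p i) A : ℝ) - (∑ j, 1 / (l j : ℝ)) * (A.ncard : ℝ) +
        ∑ j, ((nFree (l j) A : ℝ) - (1 - 1 / (l j : ℝ)) * (A.ncard : ℝ)) := by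
  have he0 : e ≠ 0 := by
    rintro rfl
    have : 1 < q ^ r := Nat.one_lt_pow (by omega) hq.one_lt
    omega
  have hcover : ∀ γ ∈ A, IsFreeElt (k * ∏ i, p i) γ → (∀ j, IsFreeElt (l j) γ) →
      IsFreeElt e γ := by
    intro γ _ hm hl
    refine IsFreeElt.of_forall_prime_dvd fun ℓ hℓ hℓe => ?_
    have hℓrad := hrad ▸ hℓ.dvd_radical hℓe he0
    rcases hℓ.prime.dvd_mul.mp hℓrad with hℓm | hℓl
    · exact ⟨_, hℓm, hm⟩
    · obtain ⟨j, -, hj⟩ := hℓ.prime.exists_mem_finset_dvd hℓl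
      exact ⟨_, hj, hl j⟩
  have hsieve := ncard_sep_add_sum_sub_le_ncard_sep A.toFinite hcover
  have hsum : ∑ j, ((nFree (l j) A : ℝ) - (1 - 1 / (l j : ℝ)) * A.ncard) =
      ∑ j, ((nFree (l j) A : ℝ) - A.ncard) + (∑ j, 1 / (l j : ℝ)) * A.ncard := by
    rw [Finset.sum_mul, ← Finset.sum_add_distrib]
    exact Finset.sum_congr rfl fun j _ => by ring
  unfold nFree at hsum ⊢
  linarith

theorem stmt_8 (q r : ℕ) (hq : IsPrimePow q) (hr : 1 ≤ r)
    (F : Type*) [Field F] [Fintype F] (hF : Fintype.card F = q ^ r)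
    (e : ℕ) (he : e ∣ q ^ r - 1) (s₁ s₂ k : ℕ)
    (p : Fin s₁ → ℕ) (l : Fin s₂ → ℕ)
    (hp : ∀ i, (p i).Prime) (hl : ∀ j, (l j).Prime)
    (hpinj : Function.Injective p) (hlinj : Function.Injective l)
    (hpl : ∀ i j, p i ≠ l j)
    (hpk : ∀ i, ¬ p i ∣ k) (hlk : ∀ j, ¬ l j ∣ k)
    (hrad : radical e = k * (∏ i, p i) * ∏ j, l j) (A : Set Fˣ) :
    (nFree e A : ℝ) ≥
      (nFree (k * ∏ i, p i) A : ℝ) - (∑ j, 1 / (l j : ℝ)) * (A.ncard : ℝ) +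
        ∑ j, ((nFree (l j) A : ℝ) - (1 - 1 / (l j : ℝ)) * (A.ncard : ℝ)) :=
  stmt_8_general q r hq hr F e he s₁ s₂ k p l hrad A
end
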